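/- arXiv:math/0303263 — 5 statements merged into one kernel-verified Lean document; each statement's English description precedes it below -/
import Mathlib

section
/- Let K be a field, V a K-vector space, and n ≥ 1 an integer. Let s_1,…,s_n ∈ V be linearly independent, let m_1,…,m_n ∈ V satisfy m_j = Σ_{k=1}^{j} a_{jk} s_k with a_{jj} = 1 (a_{jk} ∈ K), and let D : V → V be a K-linear map satisfying D m_j = Σ_{k=1}^{j} b_{jk} s_k with b_{jj} = ε_j (b_{jk}, ε_j ∈ K), where ε_j ≠ ε_n for all 1 ≤ j < n. Put d_{jk} = b_{jk} − ε_n·a_{jk} for 1 ≤ k < j ≤ n. Let N be the n×(n−1) matrix with entries N_{j,k} = ε_j − ε_n if k = j, N_{j,k} = d_{j,k} if k < j, and N_{j,k} = 0 if k > j, and for 1 ≤ j ≤ n let N^{(j)} denote the (n−1)×(n−1) matrix obtained from N by deleting its j-th row. Then the vector p := (∏_{j=1}^{n−1}(ε_n − ε_j))^{−1} · Σ_{j=1}^{n} (−1)^{j+1} det(N^{(j)}) · m_j (the cofactor expansion along the first column of the lower Hessenberg determinant whose first column is (m_1,…,m_n) and whose remaining n−1 columns are given by N) satisfies D p = ε_n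 · p, and the coefficient of m_n in this expression for p equals 1. -/
/-!
Put `μ = ε_n`. The triangularity of `m` and `D m` gives `D m_j - μ m_j = ∑_{k<n} N_{jk} s_k`: the
`s_n`-coefficient vanishes since only `m_n` involves `s_n`, with coefficient `ε_n - μ a_nn = 0`.
The signed maximal minors `(-1)^(j+1) det N^{(j)}` form a left null vector of `N` (Laplace expansion
of `N` with one of its columns repeated in front), so `D - μ` kills `∑_j (-1)^(j+1) det N^{(j)} m_j`.
Deleting the last row of `N` leaves a lower triangular matrix with diagonal `ε_j - ε_n`, whence the
coefficient of `m_n`.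
-/

open Finset

namespace Matrix

variable {R : Type*} [CommRing R] {n : ℕ}

def signedMaximalMinor (N : Matrix (Fin (n + 1)) (Fin n) R) (j : Fin (n + 1)) : R :=
  (-1) ^ (j : ℕ) * (N.submatrix j.succAbove id).det

theorem sum_signedMaximalMinor_mul_eq_zero (N : Matrix (Fin (n + 1)) (Fin n) R) (k : Fin n) :
    ∑ j, N.signedMaximalMinor j * N j k = 0 := by
  let M : Matrix (Fin (n + 1)) (Fin (n + 1)) R := of fun j => Fin.cons (N j k) (N j)
  have hM : M.det = 0 :=
    det_zero_of_column_eq (Fin.succ_ne_zero k).symm fun j => rfl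
  rw [det_succ_column_zero] at hM
  rw [← hM]
  refine sum_congr rfl fun j _ => ?_
  rw [signedMaximalMinor, mul_right_comm]
  rfl

theorem det_submatrix_succAbove_last_of_lowerTriangular
    (N : Matrix (Fin (n + 1)) (Fin n) R) (hN : ∀ j k : Fin n, j < k → N j.castSucc k = 0) :
    (N.submatrix (Fin.last n).succAbove id).det = ∏ k : Fin n, N k.castSucc k := by
  rw [Fin.succAbove_last, det_of_isLowerTriangular (N.submatrix Fin.castSucc id) hN]
  rfl

end Matrix

section Operator

variable {R V : Type*} [CommRing R] [AddCommGroup V] [Module R V] {n : ℕ}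

theorem LinearMap.apply_sum_signedMaximalMinor_smul (f : V →ₗ[R] V) (μ : R)
    (m : Fin (n + 1) → V) (t : Fin n → V) (N : Matrix (Fin (n + 1)) (Fin n) R)
    (h : ∀ j, f (m j) - μ • m j = ∑ k, N j k • t k) :
    f (∑ j, N.signedMaximalMinor j • m j) = μ • ∑ j, N.signedMaximalMinor j • m j := by
  rw [← sub_eq_zero, map_sum, smul_sum, ← sum_sub_distrib]
  calc ∑ j, (f (N.signedMaximalMinor j • m j) - μ • N.signedMaximalMinor j • m j)
      = ∑ j, ∑ k, (N.signedMaximalMinor j * N j k) • t k := by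
        refine sum_congr rfl fun j _ => ?_
        rw [map_smul, smul_comm μ, ← smul_sub, h, smul_sum]
        simp only [smul_smul]
    _ = ∑ k, (∑ j, N.signedMaximalMinor j * N j k) • t k := by
        rw [sum_comm]
        simp only [sum_smul]
    _ = 0 := by
        simp only [N.sum_signedMaximalMinor_mul_eq_zero, zero_smul, sum_const_zero]

variable {s m : Fin (n + 1) → V} {a b : Fin (n + 1) → Fin (n + 1) → R} {ε : Fin (n + 1) → R}
  {D : V →ₗ[R] V} {N : Matrix (Fin (n + 1)) (Fin n) R}

theorem apply_sub_smul_eq_sum_Iic (hm : ∀ j, m j = ∑ k ∈ Iic j, a j k • s k)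
    (hD : ∀ j, D (m j) = ∑ k ∈ Iic j, b j k • s k) (μ : R) (j : Fin (n + 1)) :
    D (m j) - μ • m j = ∑ k ∈ Iic j, (b j k - μ * a j k) • s k := by
  rw [hD, hm, smul_sum, ← sum_sub_distrib]
  simp only [sub_smul, mul_smul]

theorem entry_eq_ite_castSucc_le (ha : ∀ j, a j j = 1) (hb : ∀ j, b j j = ε j)
    (hN : ∀ (j : Fin (n + 1)) (k : Fin n),
      N j k =
        if (k : ℕ) = (j : ℕ) then ε j - ε (Fin.last n)
        else if (k : ℕ) < (j : ℕ) then
          b j (Fin.castSucc k) - ε (Fin.last n) * a j (Fin.castSucc k)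
        else 0)
    (j : Fin (n + 1)) (k : Fin n) :
    N j k = if k.castSucc ≤ j then b j k.castSucc - ε (Fin.last n) * a j k.castSucc else 0 := by
  rw [hN]
  simp only [Fin.le_def, Fin.val_castSucc]
  split_ifs with hkj <;> try omega
  · obtain rfl : k.castSucc = j := Fin.ext hkj
    rw [ha, hb, mul_one]
  all_goals rfl

theorem apply_sub_smul_last_eq_sum_castSucc (hm : ∀ j, m j = ∑ k ∈ Iic j, a j k • s k)
    (ha : ∀ j, a j j = 1) (hD : ∀ j, D (m j) = ∑ k ∈ Iic j, b j k • s k)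
    (hb : ∀ j, b j j = ε j)
    (hN : ∀ (j : Fin (n + 1)) (k : Fin n),
      N j k =
        if (k : ℕ) = (j : ℕ) then ε j - ε (Fin.last n)
        else if (k : ℕ) < (j : ℕ) then
          b j (Fin.castSucc k) - ε (Fin.last n) * a j (Fin.castSucc k)
        else 0)
    (j : Fin (n + 1)) :
    D (m j) - ε (Fin.last n) • m j = ∑ k : Fin n, N j k • s k.castSucc := by
  have hlast : (if Fin.last n ≤ j then
      (b j (Fin.last n) - ε (Fin.last n) * a j (Fin.last n)) • s (Fin.last n) else 0) = 0 := by
    split_ifs with hj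
    · obtain rfl := (Fin.last_le_iff.mp hj)
      rw [ha, hb, mul_one, sub_self, zero_smul]
    · rfl
  rw [apply_sub_smul_eq_sum_Iic hm hD, ← univ_inter (Iic j), ← sum_ite_mem,
    Fin.sum_univ_castSucc]
  simp only [mem_Iic, hlast, add_zero, entry_eq_ite_castSucc_le ha hb hN, ite_smul, zero_smul]

end Operator

theorem determinantal_formula_eigenvector_general
    {K V : Type*} [Field K] [AddCommGroup V] [Module K V]
    (n : ℕ) (s m : Fin (n + 1) → V) (a b : Fin (n + 1) → Fin (n + 1) → K)
    (ε : Fin (n + 1) → K) (D : V →ₗ[K] V)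
    (hm : ∀ j, m j = ∑ k ∈ Finset.Iic j, a j k • s k)
    (ha : ∀ j, a j j = 1)
    (hD : ∀ j, D (m j) = ∑ k ∈ Finset.Iic j, b j k • s k)
    (hb : ∀ j, b j j = ε j)
    (hreg : ∀ j : Fin (n + 1), j ≠ Fin.last n → ε j ≠ ε (Fin.last n))
    (N : Matrix (Fin (n + 1)) (Fin n) K)
    (hN : ∀ (j : Fin (n + 1)) (k : Fin n),
      N j k =
        if (k : ℕ) = (j : ℕ) then ε j - ε (Fin.last n)
        else if (k : ℕ) < (j : ℕ) then
          b j (Fin.castSucc k) - ε (Fin.last n) * a j (Fin.castSucc k)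
        else 0)
    (p : V)
    (hp : p = (∏ j : Fin n, (ε (Fin.last n) - ε (Fin.castSucc j)))⁻¹ •
        ∑ j : Fin (n + 1),
          ((-1 : K) ^ (j : ℕ) * (N.submatrix j.succAbove id).det) • m j) :
    D p = ε (Fin.last n) • p ∧
      (∏ j : Fin n, (ε (Fin.last n) - ε (Fin.castSucc j)))⁻¹ *
        ((-1 : K) ^ n * (N.submatrix (Fin.last n).succAbove id).det) = 1 := by
  refine ⟨?_, ?_⟩
  · rw [hp, map_smul, smul_comm (ε (Fin.last n))]
    exact congrArg _ <| D.apply_sum_signedMaximalMinor_smul _ m _ N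
      (apply_sub_smul_last_eq_sum_castSucc hm ha hD hb hN)
  · have hupper : ∀ j k : Fin n, j < k → N j.castSucc k = 0 := fun j k hjk => by
      rw [hN, Fin.val_castSucc, if_neg (by omega), if_neg (by omega)]
    have hdiag : ∀ k : Fin n, N k.castSucc k = -(ε (Fin.last n) - ε k.castSucc) := fun k => by
      rw [hN, if_pos (Fin.val_castSucc k).symm, neg_sub]
    rw [N.det_submatrix_succAbove_last_of_lowerTriangular hupper, Finset.prod_congr rfl
      fun k _ => hdiag k, prod_neg, card_univ, Fintype.card_fin, ← mul_assoc ((-1 : K) ^ n),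
      ← pow_add, Even.neg_one_pow ⟨n, rfl⟩, one_mul]
    refine inv_mul_cancel₀ (prod_ne_zero_iff.mpr fun j _ => sub_ne_zero.mpr ?_)
    exact (hreg _ (Fin.castSucc_lt_last j).ne).symm

/-- **Determinantal diagonalization of a regular triangular operator.**
`n+1` plays the role of the `n ≥ 1` of the informal statement; indices are
`0`-based, so the last index `Fin.last n` corresponds to the index `n` of the
informal statement, and the `(n-1)`-column matrix `N` has columns indexed by
`Fin n` (column `k : Fin n` corresponding to the informal column `k+1`, i.e. to
the index `Fin.castSucc k`). -/
theorem determinantal_formula_eigenvector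
    {K V : Type*} [Field K] [AddCommGroup V] [Module K V]
    (n : ℕ) (s m : Fin (n + 1) → V) (a b : Fin (n + 1) → Fin (n + 1) → K)
    (ε : Fin (n + 1) → K) (D : V →ₗ[K] V)
    (hs : LinearIndependent K s)
    (hm : ∀ j, m j = ∑ k ∈ Finset.Iic j, a j k • s k)
    (ha : ∀ j, a j j = 1)
    (hD : ∀ j, D (m j) = ∑ k ∈ Finset.Iic j, b j k • s k)
    (hb : ∀ j, b j j = ε j)
    (hreg : ∀ j : Fin (n + 1), j ≠ Fin.last n → ε j ≠ ε (Fin.last n))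
    (N : Matrix (Fin (n + 1)) (Fin n) K)
    (hN : ∀ (j : Fin (n + 1)) (k : Fin n),
      N j k =
        if (k : ℕ) = (j : ℕ) then ε j - ε (Fin.last n)
        else if (k : ℕ) < (j : ℕ) then
          b j (Fin.castSucc k) - ε (Fin.last n) * a j (Fin.castSucc k)
        else 0)
    (p : V)
    (hp : p = (∏ j : Fin n, (ε (Fin.last n) - ε (Fin.castSucc j)))⁻¹ •
        ∑ j : Fin (n + 1),
          ((-1 : K) ^ (j : ℕ) * (N.submatrix j.succAbove id).det) • m j) :
    D p = ε (Fin.last n) • p ∧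
      (∏ j : Fin n, (ε (Fin.last n) - ε (Fin.castSucc j)))⁻¹ *
        ((-1 : K) ^ n * (N.submatrix (Fin.last n).succAbove id).det) = 1 :=
  determinantal_formula_eigenvector_general n s m a b ε D hm ha hD hb hreg N hN p hp
end

section
/- Let K be a field, n ≥ 1 an integer, and let ε_1,…,ε_n ∈ K with ε_j ≠ ε_n for 1 ≤ j < n, and d_{jk} ∈ K for 1 ≤ k < j ≤ n. Define c_n = 1 and, for 1 ≤ ℓ < n, c_ℓ = Σ over all integers r ≥ 1 and all chains ℓ = j_r < j_{r−1} < ⋯ < j_1 < j_0 = n of the quantity (d_{j_0 j_1} d_{j_1 j_2} ⋯ d_{j_{r−1} j_r}) / ((ε_n − ε_{j_1})(ε_n − ε_{j_2}) ⋯ (ε_n − ε_{j_r})). Then these coefficients satisfy, for every 1 < ℓ ≤ n, the linear recurrence (ε_n − ε_{ℓ−1})·c_{ℓ−1} = Σ_{k=ℓ}^{n} c_k · d_{k,ℓ−1}. -/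
/-!
Group the chains ending at `ℓ` by their second-to-last element `k`. The chain that jumps
directly from `n` to `ℓ` contributes `d n ℓ / (ε n - ε ℓ)`; every other chain is a chain ending
at `k > ℓ` extended by the step `k → ℓ`, which multiplies its weight by `d k ℓ / (ε n - ε ℓ)`.
Summing over `k` gives `(ε n - ε ℓ) c ℓ = d n ℓ + ∑_{ℓ < k < n} c k d k ℓ`, and `c n = 1` turns
the right-hand side into the recurrence.
-/

open Finset

theorem Finset.sum_powerset_eq_add_sum_sum_insert_min {α M : Type*} [LinearOrder α]
    [AddCommMonoid M] (s : Finset α) (f : Finset α → M) :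
    ∑ t ∈ s.powerset, f t = f ∅ + ∑ k ∈ s, ∑ t ∈ {j ∈ s | k < j}.powerset, f (insert k t) := by
  induction s using Finset.induction_on_min with
  | empty => simp
  | insert a s ha ih =>
    have has : a ∉ s := fun h => lt_irrefl a (ha a h)
    have hfilter : ∀ k ∈ s, {j ∈ insert a s | k < j} = {j ∈ s | k < j} := fun k hk => by
      rw [filter_insert, if_neg (ha k hk).not_gt]
    rw [sum_powerset_insert has, ih, sum_insert has, filter_insert, if_neg (lt_irrefl a),
      filter_true_of_mem ha, sum_congr rfl fun k hk =>
        congrArg (∑ t ∈ ·.powerset, f (insert k t)) (hfilter k hk)]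
    abel

theorem Finset.Ioo_filter_gt {α : Type*} [LinearOrder α] [LocallyFiniteOrder α] (a b c : α) :
    {x ∈ Ioo a b | c < x} = Ioo (max a c) b := by
  grind

theorem List.prod_map_zip_cons_append_pair {α M : Type*} [CommMonoid M] (f : α → α → M)
    (x y : α) : ∀ (a : α) (l : List α),
    (((a :: (l ++ [x, y])).zip (l ++ [x, y])).map fun p => f p.1 p.2).prod =
      (((a :: (l ++ [x])).zip (l ++ [x])).map fun p => f p.1 p.2).prod * f x y
  | a, [] => by simp
  | a, b :: t => by
    simp only [List.cons_append, List.zip_cons_cons, List.map_cons, List.prod_cons,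
      List.prod_map_zip_cons_append_pair f x y b t, mul_assoc]

section Chains

variable {ι K : Type*} [LinearOrder ι] [Field K]

/-- The chain `top > j_1 > ⋯ > j_{r-1} > ℓ` with intermediate set `S = {j_1, …, j_{r-1}}`,
listed without `top`. -/
def chainList (S : Finset ι) (ℓ : ι) : List ι := (S.sort (· ≤ ·)).reverse ++ [ℓ]

def chainWeight (ε : ι → K) (d : ι → ι → K) (top : ι) (l : List ι) : K :=
  (((top :: l).zip l).map fun p => d p.1 p.2).prod / (l.map fun j => ε top - ε j).prod

variable (ε : ι → K) (d : ι → ι → K) (top : ι)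

theorem chainWeight_chainList_empty (ℓ : ι) :
    chainWeight ε d top (chainList ∅ ℓ) = d top ℓ / (ε top - ε ℓ) := by
  simp [chainWeight, chainList]

theorem chainWeight_chainList_insert {S : Finset ι} {k : ι} (hS : ∀ j ∈ S, k < j) (ℓ : ι) :
    chainWeight ε d top (chainList (insert k S) ℓ) =
      chainWeight ε d top (chainList S k) * (d k ℓ / (ε top - ε ℓ)) := by
  have hsort : (insert k S).sort (· ≤ ·) = k :: S.sort (· ≤ ·) :=
    Finset.sort_insert _ (fun j hj => (hS j hj).le) fun hk => lt_irrefl k (hS k hk)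
  simp only [chainWeight, chainList, hsort, List.reverse_cons, List.append_assoc,
    List.singleton_append, List.prod_map_zip_cons_append_pair, List.map_append, List.prod_append]
  simp [div_mul_div_comm, mul_assoc]

variable [LocallyFiniteOrder ι]

def chainSum (ℓ : ι) : K :=
  ∑ S ∈ (Ioo ℓ top).powerset, chainWeight ε d top (chainList S ℓ)

theorem sub_mul_chainSum {ℓ : ι} (hℓ : ε ℓ ≠ ε top) :
    (ε top - ε ℓ) * chainSum ε d top ℓ =
      d top ℓ + ∑ k ∈ Ioo ℓ top, chainSum ε d top k * d k ℓ := by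
  have hε : ε top - ε ℓ ≠ 0 := sub_ne_zero.mpr hℓ.symm
  rw [chainSum, sum_powerset_eq_add_sum_sum_insert_min, mul_add,
    chainWeight_chainList_empty, mul_div_cancel₀ _ hε, mul_sum]
  refine congrArg _ (sum_congr rfl fun k hk => ?_)
  rw [Ioo_filter_gt, max_eq_right (mem_Ioo.mp hk).1.le, chainSum, mul_sum, sum_mul]
  refine sum_congr rfl fun S hS => ?_
  have hkS : ∀ j ∈ S, k < j := fun j hj => (mem_Ioo.mp (mem_powerset.mp hS hj)).1
  rw [chainWeight_chainList_insert ε d top hkS]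
  field_simp

end Chains

/-- **Closed-form solution of the descending linear recurrence as a sum over
chains.**  `n+1` plays the role of the `n ≥ 1` of the informal statement;
indices are `0`-based, so `Fin.last n` corresponds to the informal index `n`.
A chain `ℓ = j_r < j_{r-1} < ⋯ < j_1 < j_0 = n` (with `r ≥ 1`) is encoded by
the set `S = {j_1, …, j_{r-1}}` of its intermediate elements, which is an
arbitrary subset of the open interval `(ℓ, n)`; the corresponding decreasing
list of indices is `Fin.last n :: ((S.sort (· ≤ ·)).reverse ++ [ℓ])`, the
numerator is the product of `d` over its consecutive pairs, and the
denominator is the product of `ε_n - ε_j` over the tail of the list. -/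
theorem explicit_chain_sum_solves_recurrence
    {K : Type*} [Field K] (n : ℕ)
    (ε : Fin (n + 1) → K) (d : Fin (n + 1) → Fin (n + 1) → K)
    (hreg : ∀ j : Fin (n + 1), j ≠ Fin.last n → ε j ≠ ε (Fin.last n))
    (c : Fin (n + 1) → K)
    (hclast : c (Fin.last n) = 1)
    (hc : ∀ ℓ : Fin (n + 1), ℓ ≠ Fin.last n →
      c ℓ = ∑ S ∈ (Finset.Ioo ℓ (Fin.last n)).powerset,
        (((Fin.last n :: ((S.sort (· ≤ ·)).reverse ++ [ℓ])).zip
            ((S.sort (· ≤ ·)).reverse ++ [ℓ])).map fun p => d p.1 p.2).prod /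
        (((S.sort (· ≤ ·)).reverse ++ [ℓ]).map fun j => ε (Fin.last n) - ε j).prod) :
    ∀ ℓ : Fin n,
      (ε (Fin.last n) - ε (Fin.castSucc ℓ)) * c (Fin.castSucc ℓ) =
        ∑ k ∈ Finset.Ioi (Fin.castSucc ℓ), c k * d k (Fin.castSucc ℓ) := by
  intro ℓ
  have hℓ : ℓ.castSucc < Fin.last n := Fin.castSucc_lt_last ℓ
  have hchain : ∀ k < Fin.last n, c k = chainSum ε d (Fin.last n) k := fun k hk => hc k hk.ne
  rw [Ioi_eq_Ioc, Fin.top_eq_last, ← Ioo_insert_right hℓ, sum_insert right_notMem_Ioo, hclast,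
    one_mul, hchain _ hℓ, sub_mul_chainSum ε d _ (hreg _ hℓ.ne)]
  exact congrArg _ (sum_congr rfl fun k hk => by rw [hchain k (mem_Ioo.mp hk).2])
end

section
/- Let K be a field, n ≥ 1, and let M be an n×n matrix over K which is lower Hessenberg in its last n−1 columns, i.e. M_{j,k} = 0 whenever k ≥ j+2, and whose superdiagonal entries are nonzero: M_{j,j+1} ≠ 0 for 1 ≤ j ≤ n−1. Define c_n = ∏_{j=1}^{n−1} (−M_{j,j+1}) and, descending, c_{ℓ−1} = (−M_{ℓ−1,ℓ})^{−1} · Σ_{j=ℓ}^{n} c_j · M_{j,ℓ} for 1 < ℓ ≤ n. Then det M = Σ_{ℓ=1}^{n} c_ℓ · M_{ℓ,1}. -/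
/-!
The recurrence says precisely that the row vector `c` is orthogonal to every column of `M`
except the first, so `c ᵥ* M = s • e₀` with `s = ∑ ℓ, c ℓ * M ℓ 0`. Multiplying on the right by
`adjugate M` gives `c (last n) * det M = s * adjugate M 0 (last n)`, and this adjugate entry is the
signed determinant of the lower triangular minor on the superdiagonal, which is `c (last n) ≠ 0`.
-/

open Finset Matrix

namespace Matrix

variable {R : Type*} [CommRing R]

theorem mul_det_eq_mul_adjugate_of_vecMul_eq_single {ι : Type*} [Fintype ι] [DecidableEq ι]
    {M : Matrix ι ι R} {c : ι → R} {k : ι} {s : R} (h : c ᵥ* M = Pi.single k s) (i : ι) :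
    c i * M.det = s * M.adjugate k i := by
  have := congrFun (congrArg (· ᵥ* M.adjugate) h) i
  simpa [vecMul_vecMul, mul_adjugate, vecMul_smul, mul_comm] using this

variable {n : ℕ} {M : Matrix (Fin (n + 1)) (Fin (n + 1)) R}

theorem adjugate_zero_last_of_hessenberg
    (hHess : ∀ j k : Fin (n + 1), (j : ℕ) + 2 ≤ (k : ℕ) → M j k = 0) :
    M.adjugate 0 (Fin.last n) = ∏ j : Fin n, -M j.castSucc j.succ := by
  have hminor : (M.submatrix (Fin.last n).succAbove (0 : Fin (n + 1)).succAbove).det =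
      ∏ j : Fin n, M j.castSucc j.succ := by
    rw [det_of_isLowerTriangular]
    · simp [Fin.succAbove_last]
    · intro i j hij
      have hij : (i : ℕ) < j := hij
      simp only [submatrix_apply, Fin.succAbove_last, Fin.zero_succAbove]
      exact hHess _ _ (by simp only [Fin.val_succ, Fin.val_castSucc]; omega)
  rw [adjugate_fin_succ_eq_det_submatrix, hminor]
  simp [prod_neg]

theorem sum_mul_col_succ_of_hessenberg
    (hHess : ∀ j k : Fin (n + 1), (j : ℕ) + 2 ≤ (k : ℕ) → M j k = 0)
    (c : Fin (n + 1) → R) (ℓ : Fin n) :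
    ∑ j, c j * M j ℓ.succ =
      c ℓ.castSucc * M ℓ.castSucc ℓ.succ + ∑ j ∈ Ioi ℓ.castSucc, c j * M j ℓ.succ := by
  rw [← sum_cons (f := fun j ↦ c j * M j ℓ.succ) notMem_Ioi_self, ← Ici_eq_cons_Ioi]
  refine (sum_subset (subset_univ _) fun j _ hj ↦ ?_).symm
  have hjℓ : (j : ℕ) < ℓ := by simpa [Fin.lt_def] using hj
  rw [hHess j ℓ.succ (by simp; omega), mul_zero]

end Matrix

/-- Indices are `0`-based: the informal `n` is `n + 1` and the informal entry `M_{j,k}` is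
`M (j - 1) (k - 1)`. -/
theorem hessenberg_det_first_column_expansion
    {K : Type*} [Field K] (n : ℕ)
    (M : Matrix (Fin (n + 1)) (Fin (n + 1)) K)
    (hHess : ∀ j k : Fin (n + 1), (j : ℕ) + 2 ≤ (k : ℕ) → M j k = 0)
    (hsuper : ∀ j : Fin n, M (Fin.castSucc j) (Fin.succ j) ≠ 0)
    (c : Fin (n + 1) → K)
    (hclast : c (Fin.last n) = ∏ j : Fin n, (-(M (Fin.castSucc j) (Fin.succ j))))
    (hcrec : ∀ ℓ : Fin n,
      c (Fin.castSucc ℓ) = (-(M (Fin.castSucc ℓ) (Fin.succ ℓ)))⁻¹ *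
        ∑ j ∈ Finset.Ioi (Fin.castSucc ℓ), c j * M j (Fin.succ ℓ)) :
    M.det = ∑ ℓ : Fin (n + 1), c ℓ * M ℓ 0 := by
  have hcol (ℓ : Fin n) : ∑ j, c j * M j ℓ.succ = 0 := by
    have hℓ := hsuper ℓ
    rw [sum_mul_col_succ_of_hessenberg hHess, hcrec ℓ]
    field_simp
    ring
  have hrow : c ᵥ* M = Pi.single 0 (∑ ℓ, c ℓ * M ℓ 0) := by
    funext k
    cases k using Fin.cases with
    | zero => simp [vecMul, dotProduct]
    | succ ℓ => simpa [vecMul, dotProduct] using hcol ℓ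
  have hc : c (Fin.last n) ≠ 0 := by
    rw [hclast]
    exact prod_ne_zero_iff.2 fun j _ ↦ neg_ne_zero.2 (hsuper j)
  have hdet := mul_det_eq_mul_adjugate_of_vecMul_eq_single hrow (Fin.last n)
  rw [adjugate_zero_last_of_hessenberg hHess, ← hclast, mul_comm _ (c _)] at hdet
  exact mul_left_cancel₀ hc hdet
end

section
/- Let g : R → ℝ be W-invariant (g_{w(α)} = g_α for all w ∈ W, α ∈ R) and set ρ_g = (1/2)Σ_{α∈R⁺} g_α α. For x ∈ E let ∂_x : ℝ[P] → ℝ[P] be the linear map with ∂_x e^μ = ⟨μ,x⟩ e^μ, and fix an orthonormal basis x_1,…,x_N of E. Then for every λ ∈ P⁺ the following identity holds in ℝ[P] (the denominator-cleared form of the action of the hypergeometric differential operator on monomial symmetric functions): (∏_{β∈R⁺}(1−e^{−β}))·Σ_{j=1}^{N} ∂_{x_j}² m_λ + Σ_{α∈R⁺} g_α (1+e^{−α}) (∏_{β∈R⁺, β≠α}(1−e^{−β})) ∂_α m_λ = (∏_{β∈R⁺}(1−e^{−β})) · [ (⟨λ+ρ_g, λ+ρ_g⟩ − ⟨ρ_g,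 ρ_g⟩)·m_λ + |W_λ|^{−1} Σ_{α∈R⁺} g_α ⟨λ,α⟩ Σ_{ℓ=1}^{⌊⟨λ,α∨⟩/2⌋} |W_{λ−ℓα}| · n_α(λ−ℓα) · m_{λ−ℓα} ], where n_α(μ) = 1 if r_α(μ) = μ and n_α(μ) = 2 otherwise. -/
open scoped RealInnerProductSpace

noncomputable section

variable {E : Type*} [NormedAddCommGroup E] [InnerProductSpace ℝ E]

/-- The coroot pairing `⟨x, α∨⟩ = 2⟨x,α⟩/⟨α,α⟩`. -/
def copair (α x : E) : ℝ := 2 * ⟪x, α⟫ / ⟪α, α⟫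

/-- The orthogonal reflection `r_α(x) = x - ⟨x,α∨⟩α`. -/
def reflRoot (α x : E) : E := x - copair α x • α

/-- The set of reflections in the roots of `R`, as linear automorphisms. -/
def reflections (R : Finset E) : Set (E ≃ₗ[ℝ] E) :=
  {g | ∃ α ∈ R, ∀ x, g x = reflRoot α x}

/-- The Weyl group of `R`. -/
def weylGroup (R : Finset E) : Subgroup (E ≃ₗ[ℝ] E) :=
  Subgroup.closure (reflections R)

/-- Membership in the weight lattice `P`. -/
def IsWeight (R : Finset E) (x : E) : Prop :=
  ∀ α ∈ R, ∃ z : ℤ, copair α x = (z : ℝ)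

/-- Dominance: nonnegative pairing with all positive coroots. -/
def IsDominant (Rp : Finset E) (x : E) : Prop :=
  ∀ α ∈ Rp, 0 ≤ copair α x

/-- The Weyl orbit `W(x)` as a finset. -/
def weylOrbit [DecidableEq E] (R : Finset E) [Fintype (weylGroup R)] (x : E) : Finset E :=
  Finset.image (fun w : weylGroup R => (w : E ≃ₗ[ℝ] E) x) Finset.univ

/-- The monomial symmetric function `m_x = Σ_{μ ∈ W(x)} e^μ`. -/
def mSym [DecidableEq E] (R : Finset E) [Fintype (weylGroup R)] (x : E) :
    AddMonoidAlgebra ℝ E :=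
  ∑ μ ∈ weylOrbit R x, AddMonoidAlgebra.single μ 1

/-- The order `|W_x|` of the stabilizer subgroup of `x` in the Weyl group. -/
def stabCard [DecidableEq E] (R : Finset E) [Fintype (weylGroup R)] (x : E) : ℕ :=
  (Finset.univ.filter fun w : weylGroup R => (w : E ≃ₗ[ℝ] E) x = x).card

-- basic lemmas
lemma copair_eq (α x : E) : copair α x = 2 * ⟪x, α⟫ / ⟪α, α⟫ := rfl

lemma copair_self {α : E} (hα : α ≠ 0) : copair α α = 2 := by
  have h : ⟪α, α⟫ ≠ 0 := fun h => hα ((inner_self_eq_zero (𝕜 := ℝ)).1 h)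
  rw [copair, mul_div_assoc, div_self h, mul_one]

lemma copair_add (α x y : E) : copair α (x + y) = copair α x + copair α y := by
  simp [copair, inner_add_left]; ring

lemma copair_smul (α : E) (c : ℝ) (x : E) : copair α (c • x) = c * copair α x := by
  simp [copair, real_inner_smul_left]; ring

lemma copair_sub (α x y : E) : copair α (x - y) = copair α x - copair α y := by
  simp [copair, inner_sub_left]; ring

lemma inner_eq_copair (α x : E) : ⟪x, α⟫ = copair α x * ⟪α, α⟫ / 2 := by
  rcases eq_or_ne α 0 with rfl | hα
  · simp [copair]
  · have h : ⟪α, α⟫ ≠ 0 := fun h => hα ((inner_self_eq_zero (𝕜 := ℝ)).1 h)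
    rw [copair, div_mul_cancel₀ _ h]; ring

lemma copair_reflRoot_self (α x : E) : copair α (reflRoot α x) = - copair α x := by
  rcases eq_or_ne α 0 with rfl | hα
  · simp [copair, reflRoot]
  · rw [reflRoot, copair_sub, copair_smul, copair_self hα]; ring

lemma reflRoot_involutive (α : E) : Function.Involutive (reflRoot α) := by
  intro x
  rw [reflRoot, copair_reflRoot_self, reflRoot]
  simp [neg_smul]

lemma inner_reflRoot (α x y : E) : ⟪reflRoot α x, reflRoot α y⟫ = ⟪x, y⟫ := by
  rcases eq_or_ne α 0 with rfl | hα
  · simp [reflRoot, copair]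
  · have h : ⟪α, α⟫ ≠ 0 := fun h => hα ((inner_self_eq_zero (𝕜 := ℝ)).1 h)
    simp only [reflRoot, copair, inner_sub_left, inner_sub_right, real_inner_smul_left,
      real_inner_smul_right]
    rw [real_inner_comm α y, real_inner_comm α x]
    field_simp
    ring

/-- reflection as a linear map -/
def reflLin (α : E) : E →ₗ[ℝ] E where
  toFun := reflRoot α
  map_add' x y := by simp [reflRoot, copair_add, add_smul]; abel
  map_smul' c x := by simp [reflRoot, copair_smul, smul_smul, smul_sub]

/-- reflection as a linear equivalence -/
def reflEquiv (α : E) : E ≃ₗ[ℝ] E :=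
  LinearEquiv.ofInvolutive (reflLin α) (reflRoot_involutive α)

@[simp] lemma reflEquiv_apply (α x : E) : reflEquiv α x = reflRoot α x := rfl

lemma reflEquiv_mem {R : Finset E} {α : E} (hα : α ∈ R) : reflEquiv α ∈ weylGroup R :=
  Subgroup.subset_closure ⟨α, hα, fun _ => rfl⟩

/-- elements of the Weyl group preserve the inner product -/
lemma weyl_inner {R : Finset E} {w : E ≃ₗ[ℝ] E} (hw : w ∈ weylGroup R) (x y : E) :
    ⟪w x, w y⟫ = ⟪x, y⟫ := by
  induction hw using Subgroup.closure_induction generalizing x y with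
  | mem g hg => obtain ⟨α, _, hgα⟩ := hg; rw [hgα, hgα, inner_reflRoot]
  | one => simp
  | mul a b _ _ ha hb =>
      have : ∀ z, (a * b) z = a (b z) := fun z => rfl
      rw [this, this, ha, hb]
  | inv a _ ha =>
      have h1 : a ((a⁻¹ : E ≃ₗ[ℝ] E) x) = x := a.apply_symm_apply x
      have h2 : a ((a⁻¹ : E ≃ₗ[ℝ] E) y) = y := a.apply_symm_apply y
      rw [← h1, ← h2, ha] <;> rw [h1, h2]

lemma weyl_copair {R : Finset E} {w : E ≃ₗ[ℝ] E} (hw : w ∈ weylGroup R) (x y : E) :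
    copair (w x) (w y) = copair x y := by
  rw [copair, copair, weyl_inner hw, weyl_inner hw]

/-- the Weyl group stabilizes `R` (as image) -/
lemma weyl_image [DecidableEq E] {R : Finset E} (hrc : ∀ α ∈ R, ∀ β ∈ R, reflRoot α β ∈ R)
    {w : E ≃ₗ[ℝ] E} (hw : w ∈ weylGroup R) : R.image w = R := by
  induction hw using Subgroup.closure_induction with
  | mem g hg =>
      obtain ⟨α, hα, hgα⟩ := hg
      apply Finset.eq_of_subset_of_card_le
      · intro x hx
        obtain ⟨β, hβ, rfl⟩ := Finset.mem_image.1 hx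
        rw [hgα]; exact hrc α hα β hβ
      · rw [Finset.card_image_of_injective _ g.injective]
  | one =>
      have : ∀ x ∈ R, (1 : E ≃ₗ[ℝ] E) x = id x := fun _ _ => rfl
      rw [Finset.image_congr this, Finset.image_id]
  | mul a b _ _ ha hb =>
      have : ∀ x, (a * b) x = a (b x) := fun _ => rfl
      calc R.image ⇑(a * b) = (R.image b).image a := by
            rw [Finset.image_image]; exact Finset.image_congr (fun x _ => this x)
        _ = R := by rw [hb, ha]
  | inv a _ ha =>
      have : (R.image ⇑a).image ⇑a⁻¹ = R := by
        rw [Finset.image_image]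
        have : ∀ x ∈ R, (⇑a⁻¹ ∘ ⇑a) x = id x := fun x _ => a.symm_apply_apply x
        rw [Finset.image_congr this, Finset.image_id]
      calc R.image ⇑a⁻¹ = (R.image ⇑a).image ⇑a⁻¹ := by rw [ha]
        _ = R := this

lemma weyl_maps_R [DecidableEq E] {R : Finset E} (hrc : ∀ α ∈ R, ∀ β ∈ R, reflRoot α β ∈ R)
    {w : E ≃ₗ[ℝ] E} (hw : w ∈ weylGroup R) {α : E} (hα : α ∈ R) : w α ∈ R := by
  rw [← weyl_image hrc hw]; exact Finset.mem_image_of_mem _ hα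

lemma reflRoot_self {α : E} (hα : α ≠ 0) : reflRoot α α = -α := by
  rw [reflRoot, copair_self hα]; module

lemma neg_mem_R [DecidableEq E] {R : Finset E} (hrc : ∀ α ∈ R, ∀ β ∈ R, reflRoot α β ∈ R)
    (h0 : (0:E) ∉ R) {α : E} (hα : α ∈ R) : -α ∈ R := by
  have := hrc α hα α hα
  rwa [reflRoot_self (fun h => h0 (h ▸ hα))] at this

-- Layer 3 : group algebra generalities
def sg (μ : E) : AddMonoidAlgebra ℝ E := AddMonoidAlgebra.single μ 1

lemma sg_mul (μ ν : E) : sg μ * sg ν = sg (μ + ν) := by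
  simp [sg, AddMonoidAlgebra.single_mul_single]

section WG
variable [DecidableEq E] (R : Finset E) [Fintype (weylGroup R)]

/-- the full group sum -/
def Msum (x : E) : AddMonoidAlgebra ℝ E := ∑ w : weylGroup R, sg ((w : E ≃ₗ[ℝ] E) x)

lemma stabCard_pos (x : E) : 0 < stabCard R x := by
  apply Finset.card_pos.2
  exact ⟨1, Finset.mem_filter.2 ⟨Finset.mem_univ _, rfl⟩⟩

lemma fiber_card (x : E) (w₀ : weylGroup R) :
    (Finset.univ.filter fun w : weylGroup R =>
      (w : E ≃ₗ[ℝ] E) x = (w₀ : E ≃ₗ[ℝ] E) x).card = stabCard R x := by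
  apply Finset.card_nbij' (fun w => w₀⁻¹ * w) (fun w => w₀ * w)
  · intro w hw
    simp only [Finset.mem_coe, Finset.mem_filter, Finset.mem_univ, true_and] at hw ⊢
    have : ((w₀⁻¹ * w : weylGroup R) : E ≃ₗ[ℝ] E) x
        = ((w₀⁻¹ : weylGroup R) : E ≃ₗ[ℝ] E) ((w : E ≃ₗ[ℝ] E) x) := rfl
    rw [this, hw]
    exact (w₀ : E ≃ₗ[ℝ] E).symm_apply_apply x
  · intro w hw
    simp only [Finset.mem_coe, Finset.mem_filter, Finset.mem_univ, true_and] at hw ⊢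
    have : ((w₀ * w : weylGroup R) : E ≃ₗ[ℝ] E) x
        = ((w₀ : weylGroup R) : E ≃ₗ[ℝ] E) ((w : E ≃ₗ[ℝ] E) x) := rfl
    rw [this, hw]
  · intro w _; group
  · intro w _; group

lemma Msum_eq_smul_mSym (x : E) : Msum R x = (stabCard R x : ℝ) • mSym R x := by
  rw [Msum, mSym, Finset.smul_sum]
  have := Finset.sum_comp (s := (Finset.univ : Finset (weylGroup R)))
    (g := fun w : weylGroup R => (w : E ≃ₗ[ℝ] E) x) (f := fun μ => sg μ)
  rw [this]
  apply Finset.sum_congr rfl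
  intro μ hμ
  obtain ⟨w₀, _, rfl⟩ := Finset.mem_image.1 hμ
  rw [fiber_card R x w₀]
  simp [sg, Nat.cast_smul_eq_nsmul ℝ]

/-- invariance of the group sum under the Weyl group -/
lemma Msum_apply (u : weylGroup R) (x : E) : Msum R ((u : E ≃ₗ[ℝ] E) x) = Msum R x := by
  rw [Msum, Msum]
  exact Fintype.sum_equiv (Equiv.mulRight u) _ _ (fun w => rfl)
end WG

-- Layer 4 : strings
lemma one_sub_mul_sg (α ν : E) : (1 - sg (-α)) * sg ν = sg ν - sg (ν - α) := by
  rw [sub_mul, one_mul, sg_mul, neg_add_eq_sub, sub_eq_add_neg ν α, add_comm]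

lemma one_add_mul_sg (α ν : E) : (1 + sg (-α)) * sg ν = sg ν + sg (ν - α) := by
  rw [add_mul, one_mul, sg_mul, neg_add_eq_sub, sub_eq_add_neg ν α, add_comm]

lemma telescope (α μ : E) (n : ℕ) :
    (1 - sg (-α)) * ∑ ℓ ∈ Finset.range n, sg (μ - (ℓ : ℝ) • α)
      = sg μ - sg (μ - (n : ℝ) • α) := by
  induction n with
  | zero => simp
  | succ n ih =>
      rw [Finset.sum_range_succ, mul_add, ih, one_sub_mul_sg]
      have h1 : μ - (n : ℝ) • α - α = μ - ((n : ℝ) + 1) • α := by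
        rw [add_smul, one_smul]; abel
      rw [h1]
      push_cast
      abel

lemma Icc_sum_eq (α μ : E) (n : ℕ) :
    ∑ ℓ ∈ Finset.Icc 1 n, sg (μ - (ℓ : ℝ) • α)
      = ∑ ℓ ∈ Finset.range n, sg ((μ - α) - (ℓ : ℝ) • α) := by
  rw [← Finset.Ico_add_one_right_eq_Icc, Finset.sum_Ico_eq_sum_range]
  simp only [Nat.add_sub_cancel]
  apply Finset.sum_congr rfl
  intro ℓ _
  congr 1
  push_cast
  rw [add_smul, one_smul]
  abel

def nn (α μ : E) : ℕ := (⌊copair α μ⌋).toNat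

def Cstr (α μ : E) : AddMonoidAlgebra ℝ E :=
  ⟪μ, α⟫ • ((∑ ℓ ∈ Finset.range (nn α μ), sg (μ - (ℓ : ℝ) • α))
    + ∑ ℓ ∈ Finset.Icc 1 (nn α μ), sg (μ - (ℓ : ℝ) • α))

lemma inner_reflRoot_self (α μ : E) : ⟪reflRoot α μ, α⟫ = -⟪μ, α⟫ := by
  rcases eq_or_ne α 0 with rfl | hα
  · simp
  · rw [reflRoot, inner_sub_left, real_inner_smul_left, inner_eq_copair α μ]
    have h : ⟪α, α⟫ ≠ 0 := fun h => hα ((inner_self_eq_zero (𝕜 := ℝ)).1 h)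
    field_simp
    ring

lemma inner_eq_zero_of_copair {α μ : E} (h : copair α μ = 0) : ⟪μ, α⟫ = 0 := by
  rw [inner_eq_copair, h]; ring

lemma pair_step_pos {α : E} (hα : α ≠ 0) (μ : E) (z : ℤ) (hz : copair α μ = z)
    (hzpos : 0 < z) :
    (1 + sg (-α)) * (⟪μ, α⟫ • sg μ) + (1 + sg (-α)) * (⟪reflRoot α μ, α⟫ • sg (reflRoot α μ))
      = (1 - sg (-α)) * (Cstr α μ + Cstr α (reflRoot α μ)) := by
  set n : ℕ := z.toNat with hn
  have hzn : (z : ℝ) = (n : ℝ) := by rw [hn]; exact_mod_cast (Int.toNat_of_nonneg hzpos.le).symm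
  have hnn : nn α μ = n := by rw [nn, hz]; simp [hn]
  have hrefl : reflRoot α μ = μ - (n : ℝ) • α := by rw [reflRoot, hz, hzn]
  have hnn' : nn α (reflRoot α μ) = 0 := by
    rw [nn, copair_reflRoot_self, hz]
    simp only [← Int.cast_neg, Int.floor_intCast]
    omega
  have hCr : Cstr α (reflRoot α μ) = 0 := by
    rw [Cstr, hnn']
    simp
  rw [hCr, add_zero, inner_reflRoot_self, hrefl, Cstr, hnn]
  rw [mul_smul_comm, mul_smul_comm, mul_smul_comm, neg_smul, ← smul_neg, ← smul_add]
  congr 1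
  rw [mul_add, telescope, Icc_sum_eq, telescope]
  rw [one_add_mul_sg, one_add_mul_sg]
  have h1 : μ - (n : ℝ) • α - α = μ - α - (n : ℝ) • α := by abel
  rw [h1]
  abel

lemma pair_step {α : E} (hα : α ≠ 0) (μ : E) (z : ℤ) (hz : copair α μ = z) :
    (1 + sg (-α)) * (⟪μ, α⟫ • sg μ) + (1 + sg (-α)) * (⟪reflRoot α μ, α⟫ • sg (reflRoot α μ))
      = (1 - sg (-α)) * (Cstr α μ + Cstr α (reflRoot α μ)) := by
  rcases lt_trichotomy z 0 with h | h | h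
  · have hz' : copair α (reflRoot α μ) = ((-z : ℤ) : ℝ) := by
      rw [copair_reflRoot_self, hz]; push_cast; ring
    have this := pair_step_pos hα (reflRoot α μ) (-z) hz' (by omega)
    rw [(reflRoot_involutive α) μ] at this
    rw [add_comm ((1 + sg (-α)) * (⟪μ, α⟫ • sg μ)), add_comm (Cstr α μ)]
    exact this
  · have h0 : ⟪μ, α⟫ = 0 := inner_eq_zero_of_copair (by rw [hz, h]; simp)
    have hrefl : reflRoot α μ = μ := by
      rw [reflRoot, hz, h]; simp
    have hC : Cstr α μ = 0 := by rw [Cstr, h0]; simp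
    rw [hrefl, h0, hC]
    simp
  · exact pair_step_pos hα μ z hz h

-- Layer 5a : arithmetic helpers
lemma floor_half_toNat (z : ℤ) : (⌊(z : ℝ) / 2⌋).toNat = z.toNat / 2 := by
  have h1 : ((z : ℝ) / 2) = (((z : ℚ) / ((2 : ℕ) : ℚ) : ℚ) : ℝ) := by push_cast; ring
  rw [h1, Rat.floor_cast, Rat.floor_intCast_div_natCast]
  omega

lemma Icc_eq_Ioc (m : ℕ) : Finset.Icc 1 m = Finset.Ioc 0 m := by
  ext ℓ; simp only [Finset.mem_Icc, Finset.mem_Ioc]; omega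

lemma Icc_one_sum {M : Type*} [AddCommMonoid M] (f : ℕ → M) (m : ℕ) :
    ∑ ℓ ∈ Finset.Icc 1 m, f ℓ = ∑ ℓ ∈ Finset.range m, f (ℓ + 1) := by
  rw [← Finset.Ico_add_one_right_eq_Icc, Finset.sum_Ico_eq_sum_range]
  simp only [Nat.add_sub_cancel]
  exact Finset.sum_congr rfl (fun ℓ _ => by rw [Nat.add_comm])

lemma fold {M : Type*} [AddCommMonoid M] [Module ℝ M] (a : ℕ → M) (n : ℕ)
    (ha : ∀ ℓ ∈ Finset.Icc 1 (n - 1), a (n - ℓ) = a ℓ) :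
    (∑ ℓ ∈ Finset.Icc 1 (n - 1), a ℓ)
      = ∑ ℓ ∈ Finset.Icc 1 (n / 2), (if 2 * ℓ = n then a ℓ else (2 : ℝ) • a ℓ) := by
  rcases Nat.lt_or_ge n 2 with hn | hn
  · interval_cases n <;> simp
  set q := n / 2 with hq
  have hq1 : q ≤ n - 1 := by omega
  have hsplit : (∑ ℓ ∈ Finset.Icc 1 (n - 1), a ℓ)
      = (∑ ℓ ∈ Finset.Ioc 0 q, a ℓ) + ∑ ℓ ∈ Finset.Ioc q (n - 1), a ℓ := by
    rw [Icc_eq_Ioc, Finset.sum_Ioc_consecutive _ (Nat.zero_le q) hq1]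
  have hrefl : ∑ ℓ ∈ Finset.Ioc q (n - 1), a ℓ = ∑ ℓ ∈ Finset.Ioc 0 (n - 1 - q), a ℓ := by
    apply Finset.sum_nbij' (fun ℓ => n - ℓ) (fun ℓ => n - ℓ)
    · intro ℓ hℓ; simp only [Finset.mem_Ioc] at *; omega
    · intro ℓ hℓ; simp only [Finset.mem_Ioc] at *; omega
    · intro ℓ hℓ; simp only [Finset.mem_Ioc] at *; omega
    · intro ℓ hℓ; simp only [Finset.mem_Ioc] at *; omega
    · intro ℓ hℓ
      simp only [Finset.mem_Ioc] at hℓ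
      exact (ha ℓ (by simp only [Finset.mem_Icc]; omega)).symm
  rcases Nat.even_or_odd n with ⟨k, hk⟩ | ⟨k, hk⟩
  · have h1 : n - 1 - q = q - 1 := by omega
    have h2 : ∑ ℓ ∈ Finset.Ioc 0 q, a ℓ = (∑ ℓ ∈ Finset.Ioc 0 (q - 1), a ℓ) + a q := by
      have hqq : q = (q - 1) + 1 := by omega
      rw [hqq, Finset.sum_Ioc_succ_top (Nat.zero_le _), ← hqq]
    rw [hsplit, hrefl, h1, h2, Icc_eq_Ioc]
    have h3 : ∑ ℓ ∈ Finset.Ioc 0 q, (if 2 * ℓ = n then a ℓ else (2:ℝ) • a ℓ)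
        = (∑ ℓ ∈ Finset.Ioc 0 (q - 1), (2:ℝ) • a ℓ) + a q := by
      have hqq : q = (q - 1) + 1 := by omega
      rw [hqq, Finset.sum_Ioc_succ_top (Nat.zero_le _), ← hqq]
      congr 1
      · apply Finset.sum_congr rfl
        intro ℓ hℓ
        simp only [Finset.mem_Ioc] at hℓ
        rw [if_neg (by omega)]
      · rw [if_pos (by omega)]
    rw [h3]
    simp only [two_smul ℝ, Finset.sum_add_distrib]
    abel
  · have h1 : n - 1 - q = q := by omega
    rw [hsplit, hrefl, h1, Icc_eq_Ioc]
    have h3 : ∑ ℓ ∈ Finset.Ioc 0 q, (if 2 * ℓ = n then a ℓ else (2:ℝ) • a ℓ)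
        = ∑ ℓ ∈ Finset.Ioc 0 q, (2:ℝ) • a ℓ := by
      apply Finset.sum_congr rfl
      intro ℓ hℓ
      rw [if_neg (by omega)]
    rw [h3]
    simp only [two_smul ℝ, Finset.sum_add_distrib]

-- Layer 6
lemma copair_neg (α x : E) : copair (-α) x = -copair α x := by
  simp [copair, neg_div]

section Main
variable [DecidableEq E] (R : Finset E) [Fintype (weylGroup R)]

lemma coe_inv_apply (w : weylGroup R) (x : E) :
    ((w⁻¹ : weylGroup R) : E ≃ₗ[ℝ] E) ((w : E ≃ₗ[ℝ] E) x) = x :=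
  (w : E ≃ₗ[ℝ] E).symm_apply_apply x

lemma coe_apply_inv (w : weylGroup R) (x : E) :
    (w : E ≃ₗ[ℝ] E) (((w⁻¹ : weylGroup R) : E ≃ₗ[ℝ] E) x) = x :=
  (w : E ≃ₗ[ℝ] E).apply_symm_apply x

lemma stepI (h0 : (0:E) ∉ R) (hrc : ∀ α ∈ R, ∀ β ∈ R, reflRoot α β ∈ R) {α : E}
    (hαR : α ∈ R) {lam : E} (hlamP : IsWeight R lam) :
    (1 + sg (-α)) * ∑ w : weylGroup R, ⟪(w : E ≃ₗ[ℝ] E) lam, α⟫ • sg ((w : E ≃ₗ[ℝ] E) lam)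
      = (1 - sg (-α)) * ∑ w : weylGroup R, Cstr α ((w : E ≃ₗ[ℝ] E) lam) := by
  have hα0 : α ≠ 0 := fun h => h0 (h ▸ hαR)
  set σ : weylGroup R := ⟨reflEquiv α, reflEquiv_mem hαR⟩ with hσdef
  have reind : ∀ (G : weylGroup R → AddMonoidAlgebra ℝ E),
      (∑ w : weylGroup R, G (σ * w)) = ∑ w : weylGroup R, G w :=
    fun G => Fintype.sum_equiv (Equiv.mulLeft σ) _ _ (fun w => rfl)
  have expand : ∀ (c : AddMonoidAlgebra ℝ E) (B : weylGroup R → AddMonoidAlgebra ℝ E),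
      (2:ℝ) • (c * ∑ w : weylGroup R, B w)
        = ∑ w : weylGroup R, (c * (B w + B (σ * w))) := by
    intro c B
    simp only [mul_add]
    rw [Finset.sum_add_distrib, ← Finset.mul_sum, ← Finset.mul_sum, reind B,
      ← mul_add, two_smul ℝ, mul_add]
  apply smul_right_injective (AddMonoidAlgebra ℝ E) (two_ne_zero (α := ℝ))
  show (2:ℝ) • _ = (2:ℝ) • _
  rw [expand, expand]
  apply Finset.sum_congr rfl
  intro w _
  have hβR : ((w⁻¹ : weylGroup R) : E ≃ₗ[ℝ] E) α ∈ R :=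
    weyl_maps_R hrc (w⁻¹ : weylGroup R).2 hαR
  obtain ⟨z, hz⟩ := hlamP _ hβR
  have hz' : copair α ((w : E ≃ₗ[ℝ] E) lam) = z := by
    have h2 := weyl_copair w.2 (((w⁻¹ : weylGroup R) : E ≃ₗ[ℝ] E) α) lam
    rw [coe_apply_inv R w α] at h2
    exact h2.trans hz
  have hσw : ((σ * w : weylGroup R) : E ≃ₗ[ℝ] E) lam = reflRoot α ((w : E ≃ₗ[ℝ] E) lam) := rfl
  rw [hσw, mul_add]
  exact pair_step hα0 _ z hz'

def Dter (lam β : E) (w : weylGroup R) : AddMonoidAlgebra ℝ E :=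
  ⟪lam, β⟫ • ((∑ ℓ ∈ Finset.range (nn β lam), sg ((w : E ≃ₗ[ℝ] E) (lam - (ℓ : ℝ) • β)))
    + ∑ ℓ ∈ Finset.Icc 1 (nn β lam), sg ((w : E ≃ₗ[ℝ] E) (lam - (ℓ : ℝ) • β)))

lemma Cstr_eq_Dter (lam : E) (w : weylGroup R) (α : E) :
    Cstr α ((w : E ≃ₗ[ℝ] E) lam) = Dter R lam (((w⁻¹ : weylGroup R) : E ≃ₗ[ℝ] E) α) w := by
  set β := ((w⁻¹ : weylGroup R) : E ≃ₗ[ℝ] E) α with hβ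
  have hwβ : (w : E ≃ₗ[ℝ] E) β = α := coe_apply_inv R w α
  have hcp : copair α ((w : E ≃ₗ[ℝ] E) lam) = copair β lam := by
    rw [← hwβ]; exact weyl_copair w.2 _ _
  have hinner : ⟪(w : E ≃ₗ[ℝ] E) lam, α⟫ = ⟪lam, β⟫ := by
    rw [← hwβ]; exact weyl_inner w.2 lam β
  have hexp : ∀ ℓ : ℝ, (w : E ≃ₗ[ℝ] E) lam - ℓ • α = (w : E ≃ₗ[ℝ] E) (lam - ℓ • β) := by
    intro ℓ; rw [map_sub, map_smul, hwβ]
  rw [Cstr, Dter, nn, nn, hcp, hinner]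
  congr 1
  congr 1 <;> exact Finset.sum_congr rfl (fun ℓ _ => by rw [hexp])

variable (Rp : Finset E)

/-- roots outside `Rp` pair nonpositively with a dominant weight, killing `Dter`. -/
lemma Dter_zero_of_not_pos (h0 : (0:E) ∉ R) (hrc : ∀ α ∈ R, ∀ β ∈ R, reflRoot α β ∈ R)
    (f : E →ₗ[ℝ] ℝ) (hf : ∀ α ∈ R, f α ≠ 0) (hRp : ∀ α, α ∈ Rp ↔ α ∈ R ∧ 0 < f α)
    {lam : E} (hlamD : IsDominant Rp lam)
    {β : E} (hβR : β ∈ R) (hβn : β ∉ Rp) (w : weylGroup R) :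
    Dter R lam β w = 0 := by
  have hfβ : f β < 0 := by
    rcases lt_trichotomy (f β) 0 with h | h | h
    · exact h
    · exact absurd h (hf β hβR)
    · exact absurd ((hRp β).2 ⟨hβR, h⟩) hβn
  have hneg : -β ∈ Rp := (hRp (-β)).2 ⟨neg_mem_R hrc h0 hβR, by rw [map_neg]; linarith⟩
  have hcp : copair β lam ≤ 0 := by
    have := hlamD (-β) hneg
    rw [copair_neg] at this
    linarith
  have hnn : nn β lam = 0 := by
    rw [nn]
    have : ⌊copair β lam⌋ ≤ 0 := Int.floor_nonpos hcp
    omega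
  rw [Dter, hnn]
  simp

lemma mem_Rp_flip (h0 : (0:E) ∉ R) (hrc : ∀ α ∈ R, ∀ β ∈ R, reflRoot α β ∈ R)
    (f : E →ₗ[ℝ] ℝ) (hf : ∀ α ∈ R, f α ≠ 0) (hRp : ∀ α, α ∈ Rp ↔ α ∈ R ∧ 0 < f α)
    {γ : E} (hγ : γ ∈ R) : (-γ ∈ Rp) ↔ ¬(γ ∈ Rp) := by
  rw [hRp, hRp, map_neg]
  have h1 := hf γ hγ
  have h2 := neg_mem_R hrc h0 hγ
  constructor
  · rintro ⟨-, h⟩ ⟨-, h'⟩; linarith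
  · intro h
    refine ⟨h2, ?_⟩
    rcases lt_trichotomy (f γ) 0 with hh | hh | hh
    · linarith
    · exact absurd hh h1
    · exact absurd ⟨hγ, hh⟩ h

/-- substitution step : the `α`-sum over `Rp` becomes a conditional sum. -/
lemma sum_Dter_sub (h0 : (0:E) ∉ R) (hrc : ∀ α ∈ R, ∀ β ∈ R, reflRoot α β ∈ R)
    (f : E →ₗ[ℝ] ℝ) (hf : ∀ α ∈ R, f α ≠ 0) (hRp : ∀ α, α ∈ Rp ↔ α ∈ R ∧ 0 < f α)
    (g : E → ℝ) (hgW : ∀ w : weylGroup R, ∀ α ∈ R, g ((w : E ≃ₗ[ℝ] E) α) = g α)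
    {lam : E} (hlamD : IsDominant Rp lam) (w : weylGroup R) :
    ∑ α ∈ Rp, g α • Dter R lam (((w⁻¹ : weylGroup R) : E ≃ₗ[ℝ] E) α) w
      = ∑ β ∈ Rp, (if (w : E ≃ₗ[ℝ] E) β ∈ Rp then g β • Dter R lam β w else 0) := by
  have step1 : ∀ α ∈ Rp, g α • Dter R lam (((w⁻¹ : weylGroup R) : E ≃ₗ[ℝ] E) α) w
      = (fun β => g β • Dter R lam β w) (((w⁻¹ : weylGroup R) : E ≃ₗ[ℝ] E) α) := by
    intro α hα
    have hαR : α ∈ R := ((hRp α).1 hα).1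
    simp only
    rw [hgW (w⁻¹ : weylGroup R) α hαR]
  rw [Finset.sum_congr rfl step1,
    ← Finset.sum_image (g := fun x => ((w⁻¹ : weylGroup R) : E ≃ₗ[ℝ] E) x)
      (f := fun β => g β • Dter R lam β w)
      (fun x _ y _ h => ((w⁻¹ : weylGroup R) : E ≃ₗ[ℝ] E).injective h),
    ← Finset.sum_filter]
  apply (Finset.sum_subset ?_ ?_).symm
  · intro β hβ
    simp only [Finset.mem_filter] at hβ
    exact Finset.mem_image.2 ⟨(w : E ≃ₗ[ℝ] E) β, hβ.2, coe_inv_apply R w β⟩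
  · intro β hβim hβf
    obtain ⟨α, hαRp, rfl⟩ := Finset.mem_image.1 hβim
    have hβR : ((w⁻¹ : weylGroup R) : E ≃ₗ[ℝ] E) α ∈ R :=
      weyl_maps_R hrc (w⁻¹ : weylGroup R).2 ((hRp α).1 hαRp).1
    have hβnotRp : ((w⁻¹ : weylGroup R) : E ≃ₗ[ℝ] E) α ∉ Rp := by
      intro hmem
      exact hβf (Finset.mem_filter.2 ⟨hmem, by rw [coe_apply_inv R w α]; exact hαRp⟩)
    rw [Dter_zero_of_not_pos R Rp h0 hrc f hf hRp hlamD hβR hβnotRp w, smul_zero]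

lemma reflRoot_string {β : E} (hβ0 : β ≠ 0) {lam : E} {z : ℤ} (hz : copair β lam = z)
    (ℓ : ℝ) : reflRoot β (lam - ℓ • β) = lam - ((z : ℝ) - ℓ) • β := by
  rw [reflRoot, copair_sub, copair_smul, copair_self hβ0, hz]
  match_scalars <;> ring

lemma Dter_mul_refl (h0 : (0:E) ∉ R) {β : E} (hβR : β ∈ R)
    {lam : E} {z : ℤ} (hz : copair β lam = z) (w : weylGroup R) :
    Dter R lam β (w * ⟨reflEquiv β, reflEquiv_mem hβR⟩) = Dter R lam β w := by
  have hβ0 : β ≠ 0 := fun h => h0 (h ▸ hβR)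
  set rβ : weylGroup R := ⟨reflEquiv β, reflEquiv_mem hβR⟩ with hrβ
  rcases le_or_gt z 0 with hle | hpos
  · have hnn : nn β lam = 0 := by
      rw [nn, hz, Int.floor_intCast]; omega
    rw [Dter, Dter, hnn]
    simp
  · set n : ℕ := z.toNat with hn
    have hnn : nn β lam = n := by rw [nn, hz, Int.floor_intCast]
    have hzn : (z : ℝ) = (n : ℝ) := by
      rw [hn]; exact_mod_cast (Int.toNat_of_nonneg hpos.le).symm
    have hexp : ∀ ℓ : ℝ, ((w * rβ : weylGroup R) : E ≃ₗ[ℝ] E) (lam - ℓ • β)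
        = (w : E ≃ₗ[ℝ] E) (lam - ((n : ℝ) - ℓ) • β) := by
      intro ℓ
      have h1 : ((w * rβ : weylGroup R) : E ≃ₗ[ℝ] E) (lam - ℓ • β)
          = (w : E ≃ₗ[ℝ] E) (reflRoot β (lam - ℓ • β)) := rfl
      rw [h1, reflRoot_string hβ0 hz, hzn]
    rw [Dter, Dter, hnn]
    congr 1
    rw [add_comm (∑ ℓ ∈ Finset.range n, sg ((w : E ≃ₗ[ℝ] E) (lam - (ℓ:ℝ) • β)))]
    congr 1
    · -- range n ↦ Icc 1 n under ℓ ↦ n - ℓ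
      apply Finset.sum_nbij' (fun ℓ => n - ℓ) (fun ℓ => n - ℓ)
      · intro ℓ hℓ; simp only [Finset.mem_range, Finset.mem_Icc] at *; omega
      · intro ℓ hℓ; simp only [Finset.mem_range, Finset.mem_Icc] at *; omega
      · intro ℓ hℓ; simp only [Finset.mem_range, Finset.mem_Icc] at *; omega
      · intro ℓ hℓ; simp only [Finset.mem_range, Finset.mem_Icc] at *; omega
      · intro ℓ hℓ
        simp only [Finset.mem_range] at hℓ
        rw [hexp]
        congr 2
        push_cast [Nat.cast_sub hℓ.le]
        ring
    · apply Finset.sum_nbij' (fun ℓ => n - ℓ) (fun ℓ => n - ℓ)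
      · intro ℓ hℓ; simp only [Finset.mem_range, Finset.mem_Icc] at *; omega
      · intro ℓ hℓ; simp only [Finset.mem_range, Finset.mem_Icc] at *; omega
      · intro ℓ hℓ; simp only [Finset.mem_range, Finset.mem_Icc] at *; omega
      · intro ℓ hℓ; simp only [Finset.mem_range, Finset.mem_Icc] at *; omega
      · intro ℓ hℓ
        simp only [Finset.mem_Icc] at hℓ
        rw [hexp]
        congr 2
        push_cast [Nat.cast_sub hℓ.2]
        ring

/-- the halving step : summing the conditional over `w` gives half the full sum. -/
lemma halving (h0 : (0:E) ∉ R) (hrc : ∀ α ∈ R, ∀ β ∈ R, reflRoot α β ∈ R)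
    (f : E →ₗ[ℝ] ℝ) (hf : ∀ α ∈ R, f α ≠ 0) (hRp : ∀ α, α ∈ Rp ↔ α ∈ R ∧ 0 < f α)
    (g : E → ℝ) {lam : E} {β : E} (hβR : β ∈ R) {z : ℤ} (hz : copair β lam = z) :
    (2 : ℝ) • ∑ w : weylGroup R, (if (w : E ≃ₗ[ℝ] E) β ∈ Rp then g β • Dter R lam β w else 0)
      = g β • ∑ w : weylGroup R, Dter R lam β w := by
  set rβ : weylGroup R := ⟨reflEquiv β, reflEquiv_mem hβR⟩ with hrβ
  have flip : ∀ w : weylGroup R,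
      (if ((w * rβ : weylGroup R) : E ≃ₗ[ℝ] E) β ∈ Rp then g β • Dter R lam β (w * rβ) else 0)
      = (if ¬ ((w : E ≃ₗ[ℝ] E) β ∈ Rp) then g β • Dter R lam β w else 0) := by
    intro w
    have hβ0 : β ≠ 0 := fun h => h0 (h ▸ hβR)
    have h1 : ((w * rβ : weylGroup R) : E ≃ₗ[ℝ] E) β = -((w : E ≃ₗ[ℝ] E) β) := by
      have h2 : ((w * rβ : weylGroup R) : E ≃ₗ[ℝ] E) β
          = (w : E ≃ₗ[ℝ] E) (reflRoot β β) := rfl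
      rw [h2, reflRoot_self hβ0, map_neg]
    have h3 : (-((w : E ≃ₗ[ℝ] E) β) ∈ Rp) ↔ ¬((w : E ≃ₗ[ℝ] E) β ∈ Rp) :=
      mem_Rp_flip R Rp h0 hrc f hf hRp (weyl_maps_R hrc w.2 hβR)
    rw [h1, Dter_mul_refl R h0 hβR hz w]
    by_cases hc : (w : E ≃ₗ[ℝ] E) β ∈ Rp
    · rw [if_neg (fun hmem => (h3.1 hmem) hc), if_neg (by simpa using hc)]
    · rw [if_pos (h3.2 hc), if_pos (by simpa using hc)]
  have reind : ∑ w : weylGroup R,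
        (if (w : E ≃ₗ[ℝ] E) β ∈ Rp then g β • Dter R lam β w else 0)
      = ∑ w : weylGroup R,
        (if ¬ ((w : E ≃ₗ[ℝ] E) β ∈ Rp) then g β • Dter R lam β w else 0) := by
    rw [← Finset.sum_congr rfl (fun w _ => flip w)]
    exact (Fintype.sum_bijective (fun w => w * rβ) (Equiv.mulRight rβ).bijective _ _
      (fun w => rfl)).symm
  rw [two_smul ℝ]
  nth_rewrite 2 [reind]
  rw [← Finset.sum_add_distrib, Finset.smul_sum]
  apply Finset.sum_congr rfl
  intro w _
  by_cases hc : (w : E ≃ₗ[ℝ] E) β ∈ Rp <;> simp [hc]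

lemma sum_Dter_total (h0 : (0:E) ∉ R) {lam β : E} {z : ℤ} (hz : copair β lam = z)
    (hz0 : 0 ≤ z) (hβR : β ∈ R) :
    ∑ w : weylGroup R, Dter R lam β w
      = (2:ℝ) • (⟪lam, β⟫ • (Msum R lam
          + ∑ ℓ ∈ Finset.Icc 1 (nn β lam / 2),
              (if 2 * ℓ = nn β lam then Msum R (lam - (ℓ:ℝ) • β)
                else (2:ℝ) • Msum R (lam - (ℓ:ℝ) • β)))) := by
  have hβ0 : β ≠ 0 := fun h => h0 (h ▸ hβR)
  set rβ : weylGroup R := ⟨reflEquiv β, reflEquiv_mem hβR⟩ with hrβ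
  set a : ℕ → AddMonoidAlgebra ℝ E := fun ℓ => Msum R (lam - (ℓ:ℝ) • β) with ha_def
  set n : ℕ := nn β lam with hn
  have hnz : (n : ℤ) = z := by
    rw [hn, nn, hz, Int.floor_intCast]; omega
  have hzn : (z : ℝ) = (n : ℝ) := by exact_mod_cast congrArg (fun t : ℤ => (t : ℝ)) hnz.symm
  have hsymm : ∀ ℓ ∈ Finset.Icc 1 (n - 1), a (n - ℓ) = a ℓ := by
    intro ℓ hℓ
    simp only [Finset.mem_Icc] at hℓ
    have h1 : ((n - ℓ : ℕ) : ℝ) = (z : ℝ) - (ℓ : ℝ) := by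
      rw [hzn]; push_cast [Nat.cast_sub (by omega : ℓ ≤ n)]; ring
    have h2 : lam - ((n - ℓ : ℕ) : ℝ) • β = reflRoot β (lam - (ℓ : ℝ) • β) := by
      rw [reflRoot_string hβ0 hz, h1]
    have h3 : reflRoot β (lam - (ℓ:ℝ) • β) = (rβ : E ≃ₗ[ℝ] E) (lam - (ℓ:ℝ) • β) := rfl
    rw [ha_def]
    simp only
    rw [h2, h3, Msum_apply]
  -- swap the w-sum inside
  have hswap : ∑ w : weylGroup R, Dter R lam β w
      = ⟪lam, β⟫ • ((∑ ℓ ∈ Finset.range n, a ℓ) + ∑ ℓ ∈ Finset.Icc 1 n, a ℓ) := by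
    simp only [Dter, ← hn]
    rw [← Finset.smul_sum, Finset.sum_add_distrib]
    congr 1
    congr 1 <;>
      (rw [Finset.sum_comm]; exact Finset.sum_congr rfl (fun ℓ _ => rfl))
  rcases eq_or_lt_of_le hz0 with heq | hpos
  · have hinner0 : ⟪lam, β⟫ = 0 := inner_eq_zero_of_copair (by rw [hz, ← heq]; simp)
    rw [hswap, hinner0]
    simp
  · have hn1 : 1 ≤ n := by omega
    have ha0 : a 0 = Msum R lam := by rw [ha_def]; simp
    have han : a n = Msum R lam := by
      have h1 : lam - (n : ℝ) • β = reflRoot β lam := by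
        rw [reflRoot, hz, hzn]
      have h2 : reflRoot β lam = (rβ : E ≃ₗ[ℝ] E) lam := rfl
      rw [ha_def]
      simp only
      rw [h1, h2, Msum_apply]
    have h_range : ∑ ℓ ∈ Finset.range n, a ℓ
        = Msum R lam + ∑ ℓ ∈ Finset.Icc 1 (n - 1), a ℓ := by
      have hh : n = (n - 1) + 1 := by omega
      rw [hh, Finset.sum_range_succ', Icc_one_sum, ← ha0]
      rw [add_comm]
      have h9 : n - 1 + 1 - 1 = n - 1 := by omega
      rw [h9]
    have h_icc : ∑ ℓ ∈ Finset.Icc 1 n, a ℓ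
        = (∑ ℓ ∈ Finset.Icc 1 (n - 1), a ℓ) + Msum R lam := by
      have hh : n = (n - 1) + 1 := by omega
      rw [hh, Finset.sum_Icc_succ_top (by omega : 1 ≤ (n-1)+1), ← hh, han]
    rw [hswap, h_range, h_icc, fold a n hsymm]
    rw [smul_comm]
    congr 1
    rw [two_smul ℝ]
    abel
end Main

-- Layer 7
section Assemble
variable [DecidableEq E] (R Rp : Finset E) [Fintype (weylGroup R)]

lemma der_Msum (der : E → AddMonoidAlgebra ℝ E →ₗ[ℝ] AddMonoidAlgebra ℝ E)
    (hder : ∀ x μ : E, der x (AddMonoidAlgebra.single μ 1)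
      = ⟪μ, x⟫ • AddMonoidAlgebra.single μ 1) (x lam : E) :
    der x (Msum R lam)
      = ∑ w : weylGroup R, ⟪(w : E ≃ₗ[ℝ] E) lam, x⟫ • sg ((w : E ≃ₗ[ℝ] E) lam) := by
  rw [Msum, map_sum]
  exact Finset.sum_congr rfl (fun w _ => hder x _)

lemma lap_Msum (der : E → AddMonoidAlgebra ℝ E →ₗ[ℝ] AddMonoidAlgebra ℝ E)
    (hder : ∀ x μ : E, der x (AddMonoidAlgebra.single μ 1)
      = ⟪μ, x⟫ • AddMonoidAlgebra.single μ 1)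
    (N : ℕ) (bE : OrthonormalBasis (Fin N) ℝ E) (lam : E) :
    ∑ j : Fin N, der (bE j) (der (bE j) (Msum R lam)) = ⟪lam, lam⟫ • Msum R lam := by
  have h1 : ∀ j, der (bE j) (der (bE j) (Msum R lam))
      = ∑ w : weylGroup R,
          (⟪(w : E ≃ₗ[ℝ] E) lam, bE j⟫ * ⟪(w : E ≃ₗ[ℝ] E) lam, bE j⟫)
            • sg ((w : E ≃ₗ[ℝ] E) lam) := by
    intro j
    rw [der_Msum R der hder, map_sum]
    apply Finset.sum_congr rfl
    intro w _
    rw [map_smul]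
    simp only [sg]
    rw [hder, smul_smul]
  simp only [h1]
  rw [Finset.sum_comm, Msum, Finset.smul_sum]
  apply Finset.sum_congr rfl
  intro w _
  rw [← Finset.sum_smul]
  congr 1
  have h2 : ∀ j : Fin N, ⟪(w : E ≃ₗ[ℝ] E) lam, bE j⟫ * ⟪(w : E ≃ₗ[ℝ] E) lam, bE j⟫
      = ⟪(w : E ≃ₗ[ℝ] E) lam, bE j⟫ * ⟪bE j, (w : E ≃ₗ[ℝ] E) lam⟫ := by
    intro j; rw [real_inner_comm ((w : E ≃ₗ[ℝ] E) lam) (bE j)]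
  rw [Finset.sum_congr rfl (fun j _ => h2 j), bE.sum_inner_mul_inner]
  exact weyl_inner w.2 lam lam

lemma key_sum (h0 : (0:E) ∉ R) (hrc : ∀ α ∈ R, ∀ β ∈ R, reflRoot α β ∈ R)
    (f : E →ₗ[ℝ] ℝ) (hf : ∀ α ∈ R, f α ≠ 0) (hRp : ∀ α, α ∈ Rp ↔ α ∈ R ∧ 0 < f α)
    (g : E → ℝ) (hgW : ∀ w : weylGroup R, ∀ α ∈ R, g ((w : E ≃ₗ[ℝ] E) α) = g α)
    {lam : E} (hlamP : IsWeight R lam) (hlamD : IsDominant Rp lam) :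
    ∑ α ∈ Rp, g α • ∑ w : weylGroup R, Cstr α ((w : E ≃ₗ[ℝ] E) lam)
      = ∑ β ∈ Rp, (g β * ⟪lam, β⟫) •
          (Msum R lam + ∑ ℓ ∈ Finset.Icc 1 (nn β lam / 2),
            (if 2 * ℓ = nn β lam then Msum R (lam - (ℓ:ℝ) • β)
              else (2:ℝ) • Msum R (lam - (ℓ:ℝ) • β))) := by
  have hRpR : ∀ α ∈ Rp, α ∈ R := fun α hα => ((hRp α).1 hα).1
  have step1 : ∑ α ∈ Rp, g α • ∑ w : weylGroup R, Cstr α ((w : E ≃ₗ[ℝ] E) lam)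
      = ∑ β ∈ Rp, ∑ w : weylGroup R,
          (if (w : E ≃ₗ[ℝ] E) β ∈ Rp then g β • Dter R lam β w else 0) := by
    calc ∑ α ∈ Rp, g α • ∑ w : weylGroup R, Cstr α ((w : E ≃ₗ[ℝ] E) lam)
        = ∑ α ∈ Rp, ∑ w : weylGroup R,
            g α • Dter R lam (((w⁻¹ : weylGroup R) : E ≃ₗ[ℝ] E) α) w := by
          apply Finset.sum_congr rfl
          intro α _
          rw [Finset.smul_sum]
          exact Finset.sum_congr rfl (fun w _ => by rw [Cstr_eq_Dter])
      _ = ∑ w : weylGroup R, ∑ α ∈ Rp,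
            g α • Dter R lam (((w⁻¹ : weylGroup R) : E ≃ₗ[ℝ] E) α) w := Finset.sum_comm
      _ = ∑ w : weylGroup R, ∑ β ∈ Rp,
            (if (w : E ≃ₗ[ℝ] E) β ∈ Rp then g β • Dter R lam β w else 0) := by
          exact Finset.sum_congr rfl
            (fun w _ => sum_Dter_sub R Rp h0 hrc f hf hRp g hgW hlamD w)
      _ = ∑ β ∈ Rp, ∑ w : weylGroup R,
            (if (w : E ≃ₗ[ℝ] E) β ∈ Rp then g β • Dter R lam β w else 0) := Finset.sum_comm
  apply smul_right_injective (AddMonoidAlgebra ℝ E) (two_ne_zero (α := ℝ))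
  show (2:ℝ) • _ = (2:ℝ) • _
  rw [step1, Finset.smul_sum, Finset.smul_sum]
  apply Finset.sum_congr rfl
  intro β hβ
  have hβR : β ∈ R := hRpR β hβ
  obtain ⟨z, hz⟩ := hlamP β hβR
  have hz0 : 0 ≤ z := by
    have := hlamD β hβ
    rw [hz] at this
    exact_mod_cast this
  rw [halving R Rp h0 hrc f hf hRp g hβR hz,
    sum_Dter_total R h0 hz hz0 hβR, smul_comm (g β) (2:ℝ), mul_smul]
end Assemble

/-- **Action of the hypergeometric differential operator on monomial symmetric
functions** (denominator-cleared form).  Here `der` is the family of directional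
derivations of the group algebra (`der_x e^μ = ⟨μ,x⟩ e^μ`), `bE` is an
orthonormal basis of `E`, `g` is a `W`-invariant multiplicity function, and
`ρg = (1/2)Σ_{α∈R⁺} g_α α`. -/
theorem hypergeometric_operator_action
    [DecidableEq E] (R Rp : Finset E) [Fintype (weylGroup R)]
    (h0 : (0 : E) ∉ R)
    (hspan : Submodule.span ℝ (R : Set E) = ⊤)
    (hcrys : ∀ α ∈ R, ∀ β ∈ R, ∃ z : ℤ, copair α β = (z : ℝ))
    (hrc : ∀ α ∈ R, ∀ β ∈ R, reflRoot α β ∈ R)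
    (f : E →ₗ[ℝ] ℝ) (hf : ∀ α ∈ R, f α ≠ 0)
    (hRp : ∀ α, α ∈ Rp ↔ α ∈ R ∧ 0 < f α)
    (g : E → ℝ)
    (hgW : ∀ w : weylGroup R, ∀ α ∈ R, g ((w : E ≃ₗ[ℝ] E) α) = g α)
    (ρg : E) (hρg : ρg = (2⁻¹ : ℝ) • ∑ α ∈ Rp, g α • α)
    (der : E → AddMonoidAlgebra ℝ E →ₗ[ℝ] AddMonoidAlgebra ℝ E)
    (hder : ∀ x μ : E, der x (AddMonoidAlgebra.single μ 1) =
      ⟪μ, x⟫ • AddMonoidAlgebra.single μ 1)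
    (N : ℕ) (bE : OrthonormalBasis (Fin N) ℝ E)
    (lam : E) (hlamP : IsWeight R lam) (hlamD : IsDominant Rp lam) :
    (∏ β ∈ Rp, (1 - AddMonoidAlgebra.single (-β) (1 : ℝ))) *
        (∑ j : Fin N, der (bE j) (der (bE j) (mSym R lam))) +
      ∑ α ∈ Rp, g α •
        ((1 + AddMonoidAlgebra.single (-α) (1 : ℝ)) *
          (∏ β ∈ Rp.erase α, (1 - AddMonoidAlgebra.single (-β) (1 : ℝ))) *
          der α (mSym R lam)) =
      (∏ β ∈ Rp, (1 - AddMonoidAlgebra.single (-β) (1 : ℝ))) *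
        ((⟪lam + ρg, lam + ρg⟫ - ⟪ρg, ρg⟫) • mSym R lam +
          ((stabCard R lam : ℝ))⁻¹ •
            ∑ α ∈ Rp, (g α * ⟪lam, α⟫) •
              ∑ ℓ ∈ Finset.Icc 1 (⌊copair α lam / 2⌋.toNat),
                ((stabCard R (lam - (ℓ : ℝ) • α) : ℝ) *
                    (if reflRoot α (lam - (ℓ : ℝ) • α) = lam - (ℓ : ℝ) • α
                      then (1 : ℝ) else 2)) •
                  mSym R (lam - (ℓ : ℝ) • α)) := by
  
  have hsg : ∀ μ : E, AddMonoidAlgebra.single μ (1:ℝ) = sg μ := fun _ => rfl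
  have hRpR : ∀ α ∈ Rp, α ∈ R := fun α hα => ((hRp α).1 hα).1
  set cst : ℝ := (stabCard R lam : ℝ) with hcst
  have hcst0 : cst ≠ 0 := Nat.cast_ne_zero.2 (stabCard_pos R lam).ne'
  -- the scalar identity
  have hscal : ⟪lam + ρg, lam + ρg⟫ - ⟪ρg, ρg⟫ = ⟪lam, lam⟫ + ∑ α ∈ Rp, g α * ⟪lam, α⟫ := by
    have hexp : ⟪lam + ρg, lam + ρg⟫ = ⟪lam, lam⟫ + 2 * ⟪lam, ρg⟫ + ⟪ρg, ρg⟫ :=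
      real_inner_add_add_self lam ρg
    have h2 : ⟪lam, ρg⟫ = 2⁻¹ * ∑ α ∈ Rp, g α * ⟪lam, α⟫ := by
      rw [hρg, real_inner_smul_right, inner_sum]
      congr 1
      exact Finset.sum_congr rfl (fun α _ => real_inner_smul_right _ _ _)
    rw [hexp, h2]; ring
  -- conversion of the inner ℓ-sums
  have hconv : ∀ α ∈ Rp,
      (∑ ℓ ∈ Finset.Icc 1 (⌊copair α lam / 2⌋.toNat),
        ((stabCard R (lam - (ℓ : ℝ) • α) : ℝ) *
          (if reflRoot α (lam - (ℓ : ℝ) • α) = lam - (ℓ : ℝ) • α then (1:ℝ) else 2)) •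
            mSym R (lam - (ℓ : ℝ) • α))
      = ∑ ℓ ∈ Finset.Icc 1 (nn α lam / 2),
          (if 2 * ℓ = nn α lam then Msum R (lam - (ℓ:ℝ) • α)
            else (2:ℝ) • Msum R (lam - (ℓ:ℝ) • α)) := by
    intro α hα
    have hαR := hRpR α hα
    have hα0 : α ≠ 0 := fun h => h0 (h ▸ hαR)
    obtain ⟨z, hz⟩ := hlamP α hαR
    have hz0 : 0 ≤ z := by
      have := hlamD α hα; rw [hz] at this; exact_mod_cast this
    have hnz : nn α lam = z.toNat := by rw [nn, hz, Int.floor_intCast]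
    have hfl : (⌊copair α lam / 2⌋).toNat = nn α lam / 2 := by
      rw [hz, floor_half_toNat, hnz]
    rw [hfl]
    apply Finset.sum_congr rfl
    intro ℓ hℓ
    have hcp : copair α (lam - (ℓ:ℝ) • α) = (z:ℝ) - 2*ℓ := by
      rw [copair_sub, copair_smul, copair_self hα0, hz]; ring
    have hiff : (reflRoot α (lam - (ℓ:ℝ) • α) = lam - (ℓ:ℝ) • α) ↔ 2 * ℓ = nn α lam := by
      rw [reflRoot, sub_eq_self, smul_eq_zero]
      constructor
      · rintro (h | h)
        · rw [hcp] at h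
          have h' : (z:ℝ) = 2*(ℓ:ℝ) := by linarith
          have h'' : z = 2*(ℓ:ℤ) := by exact_mod_cast h'
          omega
        · exact absurd h hα0
      · intro h
        left
        rw [hcp]
        have h'' : z = 2*(ℓ:ℤ) := by omega
        rw [h'']; push_cast; ring
    by_cases hc : 2 * ℓ = nn α lam
    · rw [if_pos (hiff.2 hc), if_pos hc, mul_one, ← Msum_eq_smul_mSym]
    · rw [if_neg (fun h => hc (hiff.1 h)), if_neg hc, Msum_eq_smul_mSym,
        mul_comm, mul_smul]
  -- the Msum-level identity
  have hkey : (∏ β ∈ Rp, (1 - sg (-β))) *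
        (∑ j : Fin N, der (bE j) (der (bE j) (Msum R lam)))
      + ∑ α ∈ Rp, g α • ((1 + sg (-α)) * (∏ β ∈ Rp.erase α, (1 - sg (-β)))
          * der α (Msum R lam))
      = (∏ β ∈ Rp, (1 - sg (-β))) *
          ((⟪lam + ρg, lam + ρg⟫ - ⟪ρg, ρg⟫) • Msum R lam
            + ∑ α ∈ Rp, (g α * ⟪lam, α⟫) •
                ∑ ℓ ∈ Finset.Icc 1 (nn α lam / 2),
                  (if 2 * ℓ = nn α lam then Msum R (lam - (ℓ:ℝ) • α)
                    else (2:ℝ) • Msum R (lam - (ℓ:ℝ) • α))) := by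
    have hY1 : ∀ α ∈ Rp,
        g α • ((1 + sg (-α)) * (∏ β ∈ Rp.erase α, (1 - sg (-β))) * der α (Msum R lam))
        = g α • ((∏ β ∈ Rp, (1 - sg (-β)))
            * ∑ w : weylGroup R, Cstr α ((w : E ≃ₗ[ℝ] E) lam)) := by
      intro α hα
      congr 1
      rw [mul_comm (1 + sg (-α)) (∏ β ∈ Rp.erase α, (1 - sg (-β))), mul_assoc,
        der_Msum R der hder, stepI R h0 hrc (hRpR α hα) hlamP, ← mul_assoc,
        Finset.prod_erase_mul Rp _ hα]
    have hY : ∑ α ∈ Rp, g α • ((1 + sg (-α)) * (∏ β ∈ Rp.erase α, (1 - sg (-β)))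
          * der α (Msum R lam))
        = (∏ β ∈ Rp, (1 - sg (-β))) *
            ((∑ α ∈ Rp, g α * ⟪lam, α⟫) • Msum R lam
              + ∑ α ∈ Rp, (g α * ⟪lam, α⟫) •
                  ∑ ℓ ∈ Finset.Icc 1 (nn α lam / 2),
                    (if 2 * ℓ = nn α lam then Msum R (lam - (ℓ:ℝ) • α)
                      else (2:ℝ) • Msum R (lam - (ℓ:ℝ) • α))) := by
      rw [Finset.sum_congr rfl hY1]
      have : ∑ α ∈ Rp, g α • ((∏ β ∈ Rp, (1 - sg (-β)))
            * ∑ w : weylGroup R, Cstr α ((w : E ≃ₗ[ℝ] E) lam))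
          = (∏ β ∈ Rp, (1 - sg (-β))) *
              ∑ α ∈ Rp, g α • ∑ w : weylGroup R, Cstr α ((w : E ≃ₗ[ℝ] E) lam) := by
        rw [Finset.mul_sum]
        exact Finset.sum_congr rfl (fun α _ => (mul_smul_comm _ _ _).symm)
      rw [this, key_sum R Rp h0 hrc f hf hRp g hgW hlamP hlamD]
      congr 1
      simp only [smul_add]
      rw [Finset.sum_add_distrib, ← Finset.sum_smul]
    rw [lap_Msum R der hder N bE lam, hY, hscal, ← mul_add]
    congr 1
    rw [add_smul]
    abel
  -- descend from Msum to mSym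
  simp only [hsg]
  have hconv2 : ∑ α ∈ Rp, (g α * ⟪lam, α⟫) •
        ∑ ℓ ∈ Finset.Icc 1 (⌊copair α lam / 2⌋.toNat),
          ((stabCard R (lam - (ℓ : ℝ) • α) : ℝ) *
            (if reflRoot α (lam - (ℓ : ℝ) • α) = lam - (ℓ : ℝ) • α then (1:ℝ) else 2)) •
              mSym R (lam - (ℓ : ℝ) • α)
      = ∑ α ∈ Rp, (g α * ⟪lam, α⟫) •
          ∑ ℓ ∈ Finset.Icc 1 (nn α lam / 2),
            (if 2 * ℓ = nn α lam then Msum R (lam - (ℓ:ℝ) • α)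
              else (2:ℝ) • Msum R (lam - (ℓ:ℝ) • α)) :=
    Finset.sum_congr rfl (fun α hα => by rw [hconv α hα])
  rw [hconv2]
  have hmS : mSym R lam = cst⁻¹ • Msum R lam := by
    rw [Msum_eq_smul_mSym, ← hcst, smul_smul, inv_mul_cancel₀ hcst0, one_smul]
  rw [hmS]
  have e1 : ∑ j : Fin N, der (bE j) (der (bE j) (cst⁻¹ • Msum R lam))
      = cst⁻¹ • ∑ j : Fin N, der (bE j) (der (bE j) (Msum R lam)) := by
    rw [Finset.smul_sum]
    exact Finset.sum_congr rfl (fun j _ => by rw [map_smul, map_smul])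
  rw [e1]
  have e2 : ∀ α ∈ Rp, g α • ((1 + sg (-α)) * (∏ β ∈ Rp.erase α, (1 - sg (-β)))
        * der α (cst⁻¹ • Msum R lam))
      = cst⁻¹ • (g α • ((1 + sg (-α)) * (∏ β ∈ Rp.erase α, (1 - sg (-β)))
        * der α (Msum R lam))) := by
    intro α _
    rw [map_smul, mul_smul_comm, smul_comm]
  rw [Finset.sum_congr rfl e2, ← Finset.smul_sum, mul_smul_comm, ← smul_add,
    smul_comm ((⟪lam + ρg, lam + ρg⟫ - ⟪ρg, ρg⟫) : ℝ) cst⁻¹, ← smul_add, mul_smul_comm]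
  exact congrArg (fun x => cst⁻¹ • x) hkey
end
end

section
/- Let λ ∈ P⁺ be a dominant weight and α ∈ R⁺ a positive root. If ℓ and ℓ′ are integers with 1 ≤ ℓ, ℓ′ ≤ ⌊⟨λ,α∨⟩/2⌋ and λ − ℓ′α lies in the Weyl orbit W(λ − ℓα), then ℓ′ = ℓ. In other words, the α-string λ−α, λ−2α, …, λ−⌊⟨λ,α∨⟩/2⌋α meets each Weyl orbit at most once. -/
/-!
Every reflection `r_α` is an isometry (for `α = 0` it is the identity), hence so is every
element of the Weyl group, and `λ - ℓ'α ∈ W(λ - ℓα)` forces `‖λ - ℓα‖ = ‖λ - ℓ'α‖`.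
Completing the square, `‖λ - tα‖² = ‖λ‖² + ‖α‖² ((t - c/2)² - (c/2)²)` with `c = ⟨λ,α∨⟩`,
so `t ↦ ‖λ - tα‖` is strictly monotone in `|t - c/2|` and thus injective on `t ≤ c/2`.
-/

open scoped RealInnerProductSpace

noncomputable section

variable {E : Type*} [NormedAddCommGroup E] [InnerProductSpace ℝ E]

lemma norm_reflRoot (α x : E) : ‖reflRoot α x‖ = ‖x‖ := by
  rcases eq_or_ne α 0 with rfl | hα
  · simp [reflRoot]
  have hαα : ⟪α, α⟫ ≠ 0 := inner_self_ne_zero.mpr hα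
  rw [← sq_eq_sq₀ (norm_nonneg _) (norm_nonneg _), ← real_inner_self_eq_norm_sq,
    ← real_inner_self_eq_norm_sq]
  simp only [reflRoot, copair, inner_sub_left, inner_sub_right, real_inner_smul_left,
    real_inner_smul_right, real_inner_comm x α]
  field_simp
  ring

lemma norm_weylGroup_apply {R : Finset E} {w : E ≃ₗ[ℝ] E} (hw : w ∈ weylGroup R) (x : E) :
    ‖w x‖ = ‖x‖ := by
  induction hw using Subgroup.closure_induction generalizing x with
  | mem g hg =>
    obtain ⟨α, -, hg⟩ := hg
    rw [hg, norm_reflRoot]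
  | one => rfl
  | mul g g' _ _ hg hg' => exact (hg _).trans (hg' x)
  | inv g _ hg => simpa using (hg (g⁻¹ x)).symm

lemma norm_sub_smul_sq (lam α : E) (hα : α ≠ 0) (t : ℝ) :
    ‖lam - t • α‖ ^ 2 =
      ‖lam‖ ^ 2 + ‖α‖ ^ 2 * ((t - copair α lam / 2) ^ 2 - (copair α lam / 2) ^ 2) := by
  have hαα : ⟪α, α⟫ ≠ 0 := inner_self_ne_zero.mpr hα
  simp only [← real_inner_self_eq_norm_sq, copair, inner_sub_left, inner_sub_right,
    real_inner_smul_left, real_inner_smul_right, real_inner_comm lam α]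
  field_simp
  ring

lemma eq_of_norm_sub_smul_eq {lam α : E} (hα : α ≠ 0) {t t' : ℝ}
    (ht : t ≤ copair α lam / 2) (ht' : t' ≤ copair α lam / 2)
    (h : ‖lam - t • α‖ = ‖lam - t' • α‖) : t = t' := by
  have hsq : (t - copair α lam / 2) ^ 2 = (t' - copair α lam / 2) ^ 2 := by
    have := congrArg (· ^ 2) h
    simp only [norm_sub_smul_sq lam α hα] at this
    have hα2 : ‖α‖ ^ 2 ≠ 0 := by positivity
    exact sub_left_injective (mul_left_cancel₀ hα2 (add_left_cancel this))
  rw [sq_eq_sq_iff_abs_eq_abs, abs_of_nonpos (by linarith), abs_of_nonpos (by linarith)] at hsq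
  linarith

lemma Nat.cast_le_of_le_toNat_floor {n : ℕ} {x : ℝ} (hn : 0 < n) (h : n ≤ ⌊x⌋.toNat) :
    (n : ℝ) ≤ x := by
  have : (n : ℤ) ≤ ⌊x⌋ := by omega
  exact_mod_cast Int.le_floor.mp this

theorem alpha_string_meets_orbit_once_general
    (R : Finset E)
    (lam : E)
    (α : E)
    (ℓ ℓ' : ℕ)
    (hℓ1 : 1 ≤ ℓ) (hℓ2 : ℓ ≤ (⌊copair α lam / 2⌋).toNat)
    (hℓ'1 : 1 ≤ ℓ') (hℓ'2 : ℓ' ≤ (⌊copair α lam / 2⌋).toNat)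
    (horb : ∃ w ∈ weylGroup R,
      (w : E ≃ₗ[ℝ] E) (lam - (ℓ : ℝ) • α) = lam - (ℓ' : ℝ) • α) :
    ℓ' = ℓ := by
  obtain ⟨w, hw, hwℓ⟩ := horb
  have hα : α ≠ 0 := by
    rintro rfl
    have hc : copair (0 : E) lam = 0 := by simp [copair]
    rw [hc, zero_div, Int.floor_zero, Int.toNat_zero] at hℓ2
    omega
  have hnorm : ‖lam - (ℓ' : ℝ) • α‖ = ‖lam - (ℓ : ℝ) • α‖ := by
    rw [← hwℓ, norm_weylGroup_apply hw]
  exact_mod_cast eq_of_norm_sub_smul_eq hα (Nat.cast_le_of_le_toNat_floor hℓ'1 hℓ'2)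
    (Nat.cast_le_of_le_toNat_floor hℓ1 hℓ2) hnorm

/-- **The α-string below a dominant weight meets each Weyl orbit at most
once.**  If `λ ∈ P⁺`, `α ∈ R⁺` and `1 ≤ ℓ, ℓ' ≤ ⌊⟨λ,α∨⟩/2⌋` are such that
`λ - ℓ'α ∈ W(λ - ℓα)`, then `ℓ' = ℓ`. -/
theorem alpha_string_meets_orbit_once
    (R Rp : Finset E)
    (h0 : (0 : E) ∉ R)
    (hspan : Submodule.span ℝ (R : Set E) = ⊤)
    (hcrys : ∀ α ∈ R, ∀ β ∈ R, ∃ z : ℤ, copair α β = (z : ℝ))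
    (hrc : ∀ α ∈ R, ∀ β ∈ R, reflRoot α β ∈ R)
    (f : E →ₗ[ℝ] ℝ) (hf : ∀ α ∈ R, f α ≠ 0)
    (hRp : ∀ α, α ∈ Rp ↔ α ∈ R ∧ 0 < f α)
    (lam : E) (hlamP : IsWeight R lam) (hlamD : IsDominant Rp lam)
    (α : E) (hα : α ∈ Rp)
    (ℓ ℓ' : ℕ)
    (hℓ1 : 1 ≤ ℓ) (hℓ2 : ℓ ≤ (⌊copair α lam / 2⌋).toNat)
    (hℓ'1 : 1 ≤ ℓ') (hℓ'2 : ℓ' ≤ (⌊copair α lam / 2⌋).toNat)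
    (horb : ∃ w ∈ weylGroup R,
      (w : E ≃ₗ[ℝ] E) (lam - (ℓ : ℝ) • α) = lam - (ℓ' : ℝ) • α) :
    ℓ' = ℓ :=
  alpha_string_meets_orbit_once_general R lam α ℓ ℓ' hℓ1 hℓ2 hℓ'1 hℓ'2 horb
end
end
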